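/- Let Ω ⊆ ℝ³ be open, let α, β : Ω → ℍ be differentiable, and let h₀ : Ω → ℝ be twice differentiable. Define v := ∇h₀ − h₀·α − h₀·star(β) (the result of applying the operator D − M^α C − conj(β) to the scalar function h₀). Then for every x ∈ Ω: Sc( Dv(x) − α(x)·star(v(x)) − β(x)·v(x) ) = −Δh₀(x) + ( |α(x)|² + |β(x)|² + div(Vec α)(x) − div(Vec β)(x) + 2·Sc(α(x)·β(x)) )·h₀(x). In other words, the Schrödinger operator −Δ + |α|² + |β|² + div(Vec α) − div(Vec β) + 2·Sc(αβ) on scalar functions is the scalar part of the composition (D − αC − β)(D − M^α C − conj(β)). -/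

import Mathlib

/-!
Write `v = ∇h₀ - h₀ γ` with `γ = α + β̄`. Since `Sc (D w) = -div (Vec w)` and `D (h₀ γ) = ∇h₀ γ + h₀ D γ`,
the product rule gives `Sc (D v) = -Δh₀ + h₀ (div Vec α - div Vec β) + ⟨∇h₀, Vec α - Vec β⟩`.
On the other hand `Sc (-α v̄ - β v) = ⟨∇h₀, Vec β - Vec α⟩ + h₀ (|α|² + |β|² + 2 Sc (α β))`,
so the first-order terms in `∇h₀` cancel in the sum.
-/

open MeasureTheory

noncomputable section

/-- The quaternion unit `i`. -/
def qi : Quaternion ℝ := ⟨0, 1, 0, 0⟩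
/-- The quaternion unit `j`. -/
def qj : Quaternion ℝ := ⟨0, 0, 1, 0⟩
/-- The quaternion unit `k`. -/
def qk : Quaternion ℝ := ⟨0, 0, 0, 1⟩

/-- Partial derivative of a quaternion-valued function on `ℝ³`. -/
def pd (i : Fin 3) (w : (Fin 3 → ℝ) → Quaternion ℝ) (x : Fin 3 → ℝ) : Quaternion ℝ :=
  fderiv ℝ w x (Pi.single i 1)

/-- Partial derivative of a real-valued function on `ℝ³`. -/
def pdR (i : Fin 3) (u : (Fin 3 → ℝ) → ℝ) (x : Fin 3 → ℝ) : ℝ :=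
  fderiv ℝ u x (Pi.single i 1)

/-- Moisil–Teodorescu operator `Dw = i ∂₁ w + j ∂₂ w + k ∂₃ w`. -/
def Dq (w : (Fin 3 → ℝ) → Quaternion ℝ) (x : Fin 3 → ℝ) : Quaternion ℝ :=
  qi * pd 0 w x + qj * pd 1 w x + qk * pd 2 w x

/-- Gradient of a real-valued function, viewed as a pure quaternion. -/
def gradq (u : (Fin 3 → ℝ) → ℝ) (x : Fin 3 → ℝ) : Quaternion ℝ :=
  ⟨0, pdR 0 u x, pdR 1 u x, pdR 2 u x⟩

/-- Laplacian of a real-valued function on `ℝ³`. -/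
def lapl (u : (Fin 3 → ℝ) → ℝ) (x : Fin 3 → ℝ) : ℝ :=
  pdR 0 (pdR 0 u) x + pdR 1 (pdR 1 u) x + pdR 2 (pdR 2 u) x

/-- Vector (non-scalar) part of a quaternion. -/
def Vecq (q : Quaternion ℝ) : Quaternion ℝ := q - (q.re : Quaternion ℝ)

/-- Divergence of the vector part of a quaternion-valued function. -/
def divVec (α : (Fin 3 → ℝ) → Quaternion ℝ) (x : Fin 3 → ℝ) : ℝ :=
  pdR 0 (fun y => (α y).imI) x + pdR 1 (fun y => (α y).imJ) x + pdR 2 (fun y => (α y).imK) x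

instance : StarModule ℝ (Quaternion ℝ) :=
  ⟨fun r a => by rw [star_trivial r]; exact QuaternionAlgebra.star_smul' r a⟩

lemma Quaternion.sq_norm_eq (a : Quaternion ℝ) :
    ‖a‖ ^ 2 = a.re ^ 2 + a.imI ^ 2 + a.imJ ^ 2 + a.imK ^ 2 := by
  rw [sq, ← Quaternion.normSq_eq_norm_mul_self, Quaternion.normSq_def']

section PartialDerivatives

variable {w w' : (Fin 3 → ℝ) → Quaternion ℝ} {u : (Fin 3 → ℝ) → ℝ} {x : Fin 3 → ℝ} (i : Fin 3)

lemma pd_add (hw : DifferentiableAt ℝ w x) (hw' : DifferentiableAt ℝ w' x) :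
    pd i (fun y => w y + w' y) x = pd i w x + pd i w' x := by
  rw [pd, fderiv_fun_add hw hw']
  rfl

lemma pd_sub (hw : DifferentiableAt ℝ w x) (hw' : DifferentiableAt ℝ w' x) :
    pd i (fun y => w y - w' y) x = pd i w x - pd i w' x := by
  rw [pd, fderiv_fun_sub hw hw']
  rfl

lemma pd_smul (hu : DifferentiableAt ℝ u x) (hw : DifferentiableAt ℝ w x) :
    pd i (fun y => u y • w y) x = u x • pd i w x + pdR i u x • w x := by
  rw [pd, fderiv_fun_smul hu hw]
  rfl

lemma pd_smul_const (hu : DifferentiableAt ℝ u x) (q : Quaternion ℝ) :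
    pd i (fun y => u y • q) x = pdR i u x • q := by
  rw [pd, fderiv_smul_const hu]
  rfl

lemma pd_star : pd i (fun y => star (w y)) x = star (pd i w x) := by
  rw [pd, fderiv_star]
  rfl

lemma differentiableAt_pdR (hu : DifferentiableAt ℝ (fderiv ℝ u) x) (j : Fin 3) :
    DifferentiableAt ℝ (pdR j u) x :=
  hu.clm_apply (differentiableAt_const _)

lemma gradq_eq_sum (u : (Fin 3 → ℝ) → ℝ) :
    gradq u = fun y => pdR 0 u y • qi + pdR 1 u y • qj + pdR 2 u y • qk := by
  -- `qi`, `qj`, `qk` are unfolded only after the projections are pushed inside: the anonymous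
  -- constructor has type `QuaternionAlgebra ℝ (-1) 0 (-1)`, where the `Quaternion` simp lemmas fail.
  ext y <;> simp [gradq] <;> simp [qi, qj, qk]

lemma differentiableAt_gradq (hu : DifferentiableAt ℝ (fderiv ℝ u) x) :
    DifferentiableAt ℝ (gradq u) x := by
  have hpdR := differentiableAt_pdR hu
  rw [gradq_eq_sum]
  fun_prop

lemma pd_gradq (hu : DifferentiableAt ℝ (fderiv ℝ u) x) :
    pd i (gradq u) x = pdR i (pdR 0 u) x • qi + pdR i (pdR 1 u) x • qj + pdR i (pdR 2 u) x • qk := by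
  have hpdR := differentiableAt_pdR hu
  rw [gradq_eq_sum, pd_add, pd_add, pd_smul_const, pd_smul_const, pd_smul_const] <;> fun_prop

lemma pdR_linearMap_comp (L : Quaternion ℝ →ₗ[ℝ] ℝ) (hw : DifferentiableAt ℝ w x) :
    pdR i (fun y => L (w y)) x = L (pd i w x) := by
  have hLw : HasFDerivAt (fun y => L (w y)) (L.toContinuousLinearMap.comp (fderiv ℝ w x)) x :=
    L.toContinuousLinearMap.hasFDerivAt.comp x hw.hasFDerivAt
  rw [pdR, hLw.fderiv]
  rfl

lemma pdR_imI (hw : DifferentiableAt ℝ w x) : pdR i (fun y => (w y).imI) x = (pd i w x).imI :=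
  pdR_linearMap_comp i (QuaternionAlgebra.imIₗ _ _ _) hw

lemma pdR_imJ (hw : DifferentiableAt ℝ w x) : pdR i (fun y => (w y).imJ) x = (pd i w x).imJ :=
  pdR_linearMap_comp i (QuaternionAlgebra.imJₗ _ _ _) hw

lemma pdR_imK (hw : DifferentiableAt ℝ w x) : pdR i (fun y => (w y).imK) x = (pd i w x).imK :=
  pdR_linearMap_comp i (QuaternionAlgebra.imKₗ _ _ _) hw

end PartialDerivatives

lemma divVec_eq {w : (Fin 3 → ℝ) → Quaternion ℝ} {x : Fin 3 → ℝ} (hw : DifferentiableAt ℝ w x) :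
    divVec w x = (pd 0 w x).imI + (pd 1 w x).imJ + (pd 2 w x).imK := by
  rw [divVec, pdR_imI 0 hw, pdR_imJ 1 hw, pdR_imK 2 hw]

lemma re_Dq (w : (Fin 3 → ℝ) → Quaternion ℝ) (x : Fin 3 → ℝ) :
    (Dq w x).re = -((pd 0 w x).imI + (pd 1 w x).imJ + (pd 2 w x).imK) := by
  simp only [Dq, Quaternion.re_add, Quaternion.re_mul]
  simp only [qi, qj, qk]
  ring

theorem factorization_first_general (Ω : Set (Fin 3 → ℝ))
    (α β : (Fin 3 → ℝ) → Quaternion ℝ)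
    (hα : ∀ x ∈ Ω, DifferentiableAt ℝ α x) (hβ : ∀ x ∈ Ω, DifferentiableAt ℝ β x)
    (h₀ : (Fin 3 → ℝ) → ℝ)
    (hh₀ : ∀ x ∈ Ω, DifferentiableAt ℝ h₀ x)
    (hh₀' : ∀ x ∈ Ω, DifferentiableAt ℝ (fderiv ℝ h₀) x) :
    ∀ x ∈ Ω,
      (Dq (fun y => gradq h₀ y - h₀ y • α y - h₀ y • star (β y)) x
          - α x * star (gradq h₀ x - h₀ x • α x - h₀ x • star (β x))
          - β x * (gradq h₀ x - h₀ x • α x - h₀ x • star (β x))).re =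
        -lapl h₀ x +
          (‖α x‖ ^ 2 + ‖β x‖ ^ 2 + divVec α x - divVec β x
            + 2 * (α x * β x).re) * h₀ x := by
  intro x hx
  have hαx := hα x hx
  have hβx := hβ x hx
  have hh₀x := hh₀ x hx
  have hfderiv_h₀x := hh₀' x hx
  have hgradx := differentiableAt_gradq hfderiv_h₀x
  have hpd_v (i : Fin 3) :
      pd i (fun y => gradq h₀ y - h₀ y • α y - h₀ y • star (β y)) x =
        pd i (gradq h₀) x - (h₀ x • pd i α x + pdR i h₀ x • α x)
          - (h₀ x • star (pd i β x) + pdR i h₀ x • star (β x)) := by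
    rw [pd_sub, pd_sub, pd_smul, pd_smul, pd_star] <;> fun_prop
  rw [Quaternion.re_sub, Quaternion.re_sub, re_Dq, hpd_v 0, hpd_v 1, hpd_v 2,
    pd_gradq 0 hfderiv_h₀x, pd_gradq 1 hfderiv_h₀x, pd_gradq 2 hfderiv_h₀x,
    divVec_eq hαx, divVec_eq hβx, Quaternion.sq_norm_eq, Quaternion.sq_norm_eq, lapl,
    gradq_eq_sum]
  simp only [Quaternion.re_add, Quaternion.re_sub, Quaternion.re_mul, Quaternion.re_smul,
    Quaternion.re_star, Quaternion.imI_add, Quaternion.imI_sub, Quaternion.imI_smul,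
    Quaternion.imI_star, Quaternion.imJ_add, Quaternion.imJ_sub, Quaternion.imJ_smul,
    Quaternion.imJ_star, Quaternion.imK_add, Quaternion.imK_sub, Quaternion.imK_smul,
    Quaternion.imK_star, smul_eq_mul]
  simp only [qi, qj, qk]
  ring

/-- the Schrödinger operator
`−Δ + |α|² + |β|² + div(Vec α) − div(Vec β) + 2 Sc(αβ)` on scalar functions is the scalar
part of the composition `(D − αC − β)(D − MᵅC − conj β)`. -/
theorem factorization_first (Ω : Set (Fin 3 → ℝ)) (hΩ : IsOpen Ω)
    (α β : (Fin 3 → ℝ) → Quaternion ℝ)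
    (hα : ∀ x ∈ Ω, DifferentiableAt ℝ α x) (hβ : ∀ x ∈ Ω, DifferentiableAt ℝ β x)
    (h₀ : (Fin 3 → ℝ) → ℝ)
    (hh₀ : ∀ x ∈ Ω, DifferentiableAt ℝ h₀ x)
    (hh₀' : ∀ x ∈ Ω, DifferentiableAt ℝ (fderiv ℝ h₀) x) :
    ∀ x ∈ Ω,
      (Dq (fun y => gradq h₀ y - h₀ y • α y - h₀ y • star (β y)) x
          - α x * star (gradq h₀ x - h₀ x • α x - h₀ x • star (β x))
          - β x * (gradq h₀ x - h₀ x • α x - h₀ x • star (β x))).re =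
        -lapl h₀ x +
          (‖α x‖ ^ 2 + ‖β x‖ ^ 2 + divVec α x - divVec β x
            + 2 * (α x * β x).re) * h₀ x :=
  factorization_first_general Ω α β hα hβ h₀ hh₀ hh₀'

end
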